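/- Let M ⊆ ℤ^d be a module of dimension s and suppose w ∈ span_ℝ M satisfies: there exist linearly independent k_1,…,k_s ∈ M ∩ ℤ^d with |k_j| ≤ K and |w·k_j| ≤ C_j ε^{δ_j} for all j, where the constants are ordered so that C_j ε^{δ_j} ≤ C_s ε^{δ_s}. Then ‖w‖ ≤ s K^{s-1} C_s ε^{δ_s}. -/

import Mathlib

/-!
Since `w` lies in the span of the `k_j`, it is recovered from the inner products `⟪w, k_j⟫`
through the dual vectors: `w = ∑ ⟪w, k_j⟫ u_j` with `⟪u_j, k_i⟫ = δ_ij`, so it suffices to show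
`‖u_j‖ ≤ K^{s-1}`. Reordering so that `k_j` comes last, `u_j = g / ‖g‖²` for the last
Gram–Schmidt vector `g`. The Gram determinant of the `k_i` equals the product of the squared
norms of their Gram–Schmidt vectors; it is a positive integer, and every factor other than `‖g‖²`
is at most `K²`, whence `‖u_j‖ = ‖g‖⁻¹ ≤ K^{s-1}`.
-/

open scoped RealInnerProductSpace

open Finset InnerProductSpace Matrix Submodule

variable {E : Type*} [NormedAddCommGroup E] [InnerProductSpace ℝ E]

section GramSchmidt

variable {ι : Type*} [LinearOrder ι] [LocallyFiniteOrderBot ι] [WellFoundedLT ι]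

theorem inner_gramSchmidt_self (v : ι → E) (i : ι) :
    ⟪gramSchmidt ℝ v i, v i⟫ = ‖gramSchmidt ℝ v i‖ ^ 2 := by
  conv_lhs => rw [gramSchmidt_def'' ℝ v i]
  rw [inner_add_right, real_inner_self_eq_norm_sq, inner_sum, add_eq_left]
  refine sum_eq_zero fun j hj => ?_
  rw [inner_smul_right, gramSchmidt_orthogonal ℝ v (mem_Iio.1 hj).ne', mul_zero]

theorem norm_gramSchmidt_le (v : ι → E) (i : ι) : ‖gramSchmidt ℝ v i‖ ≤ ‖v i‖ := by
  have h := real_inner_le_norm (gramSchmidt ℝ v i) (v i)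
  rw [inner_gramSchmidt_self, sq] at h
  rcases (norm_nonneg (gramSchmidt ℝ v i)).eq_or_lt with h0 | h0
  · exact h0 ▸ norm_nonneg _
  · exact le_of_mul_le_mul_left h h0

theorem inner_inv_norm_sq_smul_gramSchmidt_of_isTop {v : ι → E} (hv : LinearIndependent ℝ v)
    {t : ι} (ht : IsTop t) (i : ι) :
    ⟪(‖gramSchmidt ℝ v t‖ ^ 2)⁻¹ • gramSchmidt ℝ v t, v i⟫ = if i = t then 1 else 0 := by
  rw [real_inner_smul_left]
  split_ifs with h
  · rw [h, inner_gramSchmidt_self, inv_mul_cancel₀]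
    exact pow_ne_zero 2 (norm_ne_zero_iff.2 (gramSchmidt_ne_zero t hv))
  · rw [gramSchmidt_inv_triangular ℝ v ((ht i).lt_of_ne h), mul_zero]

noncomputable def gramSchmidtCoeff (v : ι → E) (a i : ι) : ℝ :=
  if i = a then 1 else if i < a then ⟪gramSchmidt ℝ v i, v a⟫ / ‖gramSchmidt ℝ v i‖ ^ 2 else 0

theorem gramSchmidtCoeff_isLowerTriangular (v : ι → E) :
    (Matrix.of (gramSchmidtCoeff v)).IsLowerTriangular := by
  intro a i (hai : a < i)
  simp [gramSchmidtCoeff, hai.ne', hai.not_gt]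

variable [Fintype ι]

theorem eq_sum_gramSchmidtCoeff_smul (v : ι → E) (a : ι) :
    v a = ∑ i, gramSchmidtCoeff v a i • gramSchmidt ℝ v i := by
  rw [← sum_subset (subset_univ (Iic a)) fun i _ hi => ?_, ← Iio_insert, sum_insert (by simp),
    gramSchmidtCoeff, if_pos rfl, one_smul]
  · conv_lhs => rw [gramSchmidt_def'' ℝ v a]
    congr 1
    refine sum_congr rfl fun i hi => ?_
    simp [gramSchmidtCoeff, (mem_Iio.1 hi).ne, mem_Iio.1 hi]
  · have hai : a < i := by simpa using hi
    simp [gramSchmidtCoeff, hai.ne', hai.not_gt]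

theorem inner_gramSchmidt_eq_gramSchmidtCoeff_mul (v : ι → E) (a i : ι) :
    ⟪v a, gramSchmidt ℝ v i⟫ = gramSchmidtCoeff v a i * ‖gramSchmidt ℝ v i‖ ^ 2 := by
  rw [eq_sum_gramSchmidtCoeff_smul v a, sum_inner, sum_eq_single i]
  · rw [real_inner_smul_left, real_inner_self_eq_norm_sq]
  · intro j _ hji
    rw [real_inner_smul_left, gramSchmidt_orthogonal ℝ v hji, mul_zero]
  · simp

theorem gram_eq_gramSchmidtCoeff_mul_diagonal_mul (v : ι → E) :
    gram ℝ v = Matrix.of (gramSchmidtCoeff v) *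
      diagonal (fun i => ‖gramSchmidt ℝ v i‖ ^ 2) * (Matrix.of (gramSchmidtCoeff v))ᵀ := by
  ext a b
  rw [gram_apply, eq_sum_gramSchmidtCoeff_smul v b, inner_sum, mul_apply]
  refine sum_congr rfl fun i _ => ?_
  simp [real_inner_smul_right, inner_gramSchmidt_eq_gramSchmidtCoeff_mul, mul_comm]

theorem det_gram_eq_prod_norm_gramSchmidt_sq (v : ι → E) :
    (gram ℝ v).det = ∏ i, ‖gramSchmidt ℝ v i‖ ^ 2 := by
  rw [gram_eq_gramSchmidtCoeff_mul_diagonal_mul, det_mul, det_mul, det_transpose,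
    det_diagonal, det_of_isLowerTriangular _ (gramSchmidtCoeff_isLowerTriangular v)]
  simp [gramSchmidtCoeff]

theorem det_gram_le_mul_norm_gramSchmidt_sq {K : ℝ} {v : ι → E} (hK : ∀ i, ‖v i‖ ≤ K) (t : ι) :
    (gram ℝ v).det ≤ (K ^ (Fintype.card ι - 1)) ^ 2 * ‖gramSchmidt ℝ v t‖ ^ 2 := by
  rw [det_gram_eq_prod_norm_gramSchmidt_sq, ← mul_prod_erase _ _ (mem_univ t), mul_comm,
    ← pow_mul, mul_comm _ 2, pow_mul, ← card_univ, ← card_erase_of_mem (mem_univ t)]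
  gcongr
  refine (prod_le_prod (fun i _ => by positivity) fun i _ => ?_).trans_eq (prod_const _)
  gcongr
  exact (norm_gramSchmidt_le v i).trans (hK i)

theorem inv_norm_gramSchmidt_le {K : ℝ} {v : ι → E} (hK : ∀ i, ‖v i‖ ≤ K)
    (hdet : 1 ≤ (gram ℝ v).det) (t : ι) :
    ‖gramSchmidt ℝ v t‖⁻¹ ≤ K ^ (Fintype.card ι - 1) := by
  have hKt : 0 ≤ K ^ (Fintype.card ι - 1) := pow_nonneg ((norm_nonneg _).trans (hK t)) _
  have h : 1 ≤ (K ^ (Fintype.card ι - 1) * ‖gramSchmidt ℝ v t‖) ^ 2 :=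
    hdet.trans ((det_gram_le_mul_norm_gramSchmidt_sq hK t).trans_eq (mul_pow ..).symm)
  rw [one_le_sq_iff₀ (by positivity)] at h
  have hg : 0 < ‖gramSchmidt ℝ v t‖ := pos_of_mul_pos_right (one_pos.trans_le h) hKt
  exact (inv_le_iff_one_le_mul₀ hg).2 h

theorem exists_dual_vector_of_one_le_det_gram {K : ℝ} {v : ι → E} (hv : LinearIndependent ℝ v)
    (hK : ∀ i, ‖v i‖ ≤ K) (hdet : 1 ≤ (gram ℝ v).det) (j : ι) :
    ∃ u ∈ span ℝ (Set.range v), (∀ i, ⟪u, v i⟫ = if i = j then 1 else 0) ∧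
      ‖u‖ ≤ K ^ (Fintype.card ι - 1) := by
  obtain ⟨t, ht⟩ : ∃ t : ι, IsTop t :=
    ⟨univ.max' ⟨j, mem_univ j⟩, fun i => le_max' _ _ (mem_univ i)⟩
  set σ := Equiv.swap j t
  set g := gramSchmidt ℝ (v ∘ σ) t
  have hσ : LinearIndependent ℝ (v ∘ σ) := hv.comp σ σ.injective
  have hdet' : 1 ≤ (gram ℝ (v ∘ σ)).det := by
    rwa [show gram ℝ (v ∘ σ) = (gram ℝ v).submatrix σ σ from rfl, det_submatrix_equiv_self]
  refine ⟨(‖g‖ ^ 2)⁻¹ • g, ?_, fun i => ?_, ?_⟩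
  · refine smul_mem _ _ (span_mono ?_ (gramSchmidt_mem_span ℝ (v ∘ σ) le_rfl))
    exact (Set.image_subset_range _ _).trans (Set.range_comp_subset_range _ _)
  · have h := inner_inv_norm_sq_smul_gramSchmidt_of_isTop hσ ht (σ i)
    simpa [σ, Equiv.swap_apply_eq_iff] using h
  · have hg : ‖g‖ ≠ 0 := norm_ne_zero_iff.2 (gramSchmidt_ne_zero t hσ)
    rw [norm_smul, norm_inv, norm_pow, norm_norm, sq, mul_inv, mul_assoc, inv_mul_cancel₀ hg,
      mul_one]
    exact inv_norm_gramSchmidt_le (v := v ∘ σ) (fun i => hK (σ i)) hdet' t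

end GramSchmidt

variable {ι : Type*} [Fintype ι] [DecidableEq ι]

theorem eq_sum_inner_smul_of_dual {v u : ι → E} (hu : ∀ j, u j ∈ span ℝ (Set.range v))
    (hdual : ∀ i j, ⟪u j, v i⟫ = if i = j then 1 else 0) {w : E}
    (hw : w ∈ span ℝ (Set.range v)) : w = ∑ j, ⟪w, v j⟫ • u j := by
  set x := w - ∑ j, ⟪w, v j⟫ • u j
  have hx : x ∈ span ℝ (Set.range v) := sub_mem hw (sum_mem fun j _ => smul_mem _ _ (hu j))
  have horth : ∀ i, ⟪x, v i⟫ = 0 := fun i => by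
    simp [x, inner_sub_left, sum_inner, real_inner_smul_left, hdual]
  obtain ⟨a, ha⟩ := mem_span_range_iff_exists_fun ℝ |>.1 hx
  have hxx : ⟪x, x⟫ = 0 := by
    rw [← ha, inner_sum]
    simp [real_inner_smul_right, ha, horth]
  exact sub_eq_zero.1 (inner_self_eq_zero.1 hxx)

theorem norm_le_card_mul_of_dual {v u : ι → E} (hu : ∀ j, u j ∈ span ℝ (Set.range v))
    (hdual : ∀ i j, ⟪u j, v i⟫ = if i = j then 1 else 0) {w : E}
    (hw : w ∈ span ℝ (Set.range v)) {L B : ℝ} (hL : ∀ j, ‖u j‖ ≤ L)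
    (hB : ∀ j, |⟪w, v j⟫| ≤ B) : ‖w‖ ≤ Fintype.card ι * L * B :=
  calc ‖w‖ = ‖∑ j, ⟪w, v j⟫ • u j‖ := congrArg _ (eq_sum_inner_smul_of_dual hu hdual hw)
    _ ≤ ∑ j, ‖⟪w, v j⟫ • u j‖ := norm_sum_le _ _
    _ ≤ ∑ _j : ι, L * B := sum_le_sum fun j _ => by
      rw [norm_smul, Real.norm_eq_abs, mul_comm]
      exact mul_le_mul (hL j) (hB j) (abs_nonneg _) ((norm_nonneg _).trans (hL j))
    _ = Fintype.card ι * L * B := by simp [mul_assoc]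

theorem one_le_det_gram_of_int {d : Type*} [Fintype d] (m : ι → d → ℤ)
    (hm : LinearIndependent ℝ fun j => (WithLp.toLp 2 fun i => (m j i : ℝ) : EuclideanSpace ℝ d)) :
    1 ≤ (gram ℝ fun j => (WithLp.toLp 2 fun i => (m j i : ℝ) : EuclideanSpace ℝ d)).det := by
  have hgram : (gram ℝ fun j => (WithLp.toLp 2 fun i => (m j i : ℝ) : EuclideanSpace ℝ d)) =
      (Matrix.of m * (Matrix.of m)ᵀ).map (Int.cast : ℤ → ℝ) := by
    ext a b
    simp [gram_apply, mul_apply, PiLp.inner_apply, mul_comm]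
  have hpos := (posDef_gram_of_linearIndependent hm).det_pos
  rw [hgram, ← Int.cast_det] at hpos ⊢
  exact_mod_cast Int.cast_pos.1 hpos

theorem projection_bound_in_resonant_zone_general
    (d s : ℕ) (K ε : ℝ)
    (C : ℕ → ℝ) (δ : ℕ → ℝ)
    (M : Set (Fin d → ℤ))
    (hdim : Module.finrank ℝ (Submodule.span ℝ
      ((fun (m : Fin d → ℤ) => (WithLp.toLp 2 (fun i => (m i : ℝ)) :
        EuclideanSpace ℝ (Fin d))) '' M)) = s)
    (w : EuclideanSpace ℝ (Fin d))
    (hw : w ∈ Submodule.span ℝ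
      ((fun (m : Fin d → ℤ) => (WithLp.toLp 2 (fun i => (m i : ℝ)) :
        EuclideanSpace ℝ (Fin d))) '' M))
    (k : Fin s → EuclideanSpace ℝ (Fin d))
    (hkM : ∀ j, k j ∈ (fun (m : Fin d → ℤ) => (WithLp.toLp 2 (fun i => (m i : ℝ)) :
      EuclideanSpace ℝ (Fin d))) '' M)
    (hkind : LinearIndependent ℝ k)
    (hkK : ∀ j, ‖k j‖ ≤ K)
    (hres : ∀ j : Fin s, |⟪w, k j⟫| ≤ C (j + 1) * ε ^ δ (j + 1))
    (hord : ∀ j : Fin s, C (j + 1) * ε ^ δ (j + 1) ≤ C s * ε ^ δ s) :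
    ‖w‖ ≤ s * K ^ (s - 1) * C s * ε ^ δ s := by
  have hspan : span ℝ (Set.range k) = span ℝ
      ((fun (m : Fin d → ℤ) => (WithLp.toLp 2 (fun i => (m i : ℝ)) :
        EuclideanSpace ℝ (Fin d))) '' M) :=
    eq_of_le_of_finrank_le (span_le.2 (Set.range_subset_iff.2 fun j => subset_span (hkM j)))
      (by rw [hdim, finrank_span_eq_card hkind, Fintype.card_fin])
  choose m _ hmk using hkM
  obtain rfl : k = fun j => WithLp.toLp 2 fun i => (m j i : ℝ) := funext fun j => (hmk j).symm
  choose u hu hdual hnorm using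
    exists_dual_vector_of_one_le_det_gram hkind hkK (one_le_det_gram_of_int m hkind)
  simpa [mul_assoc] using norm_le_card_mul_of_dual hu (fun i j => hdual j i) (hspan ▸ hw) hnorm
    fun j => (hres j).trans (hord j)

/-- If `w ∈ span_ℝ M` for a module `M ⊆ ℤ^d` of dimension `s`, and there are
linearly independent `k_1,…,k_s ∈ M` with `|k_j| ≤ K` and
`|w·k_j| ≤ C_j ε^{δ_j}`, where `C_j ε^{δ_j} ≤ C_s ε^{δ_s}` for all `j`, then
`‖w‖ ≤ s K^{s-1} C_s ε^{δ_s}`. -/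
theorem projection_bound_in_resonant_zone
    (d s : ℕ) (hs : 1 ≤ s) (K ε : ℝ) (hK : 1 ≤ K) (hε : 0 < ε)
    (C : ℕ → ℝ) (δ : ℕ → ℝ)
    (M : Set (Fin d → ℤ))
    (hdim : Module.finrank ℝ (Submodule.span ℝ
      ((fun (m : Fin d → ℤ) => (WithLp.toLp 2 (fun i => (m i : ℝ)) :
        EuclideanSpace ℝ (Fin d))) '' M)) = s)
    (w : EuclideanSpace ℝ (Fin d))
    (hw : w ∈ Submodule.span ℝ
      ((fun (m : Fin d → ℤ) => (WithLp.toLp 2 (fun i => (m i : ℝ)) :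
        EuclideanSpace ℝ (Fin d))) '' M))
    (k : Fin s → EuclideanSpace ℝ (Fin d))
    (hkM : ∀ j, k j ∈ (fun (m : Fin d → ℤ) => (WithLp.toLp 2 (fun i => (m i : ℝ)) :
      EuclideanSpace ℝ (Fin d))) '' M)
    (hkind : LinearIndependent ℝ k)
    (hkK : ∀ j, ‖k j‖ ≤ K)
    (hres : ∀ j : Fin s, |⟪w, k j⟫| ≤ C (j + 1) * ε ^ δ (j + 1))
    (hord : ∀ j : Fin s, C (j + 1) * ε ^ δ (j + 1) ≤ C s * ε ^ δ s) :
    ‖w‖ ≤ s * K ^ (s - 1) * C s * ε ^ δ s :=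
  projection_bound_in_resonant_zone_general d s K ε C δ M hdim w hw k hkM hkind hkK hres hord
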